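/- In the quandle chain complex of R_4 with integer coefficients, the 2-chain (a,b) + (a*b,b*a) + (b,a) + (b*a,a*b) + (a,b*a) + (a*b,b) + (b*a,a) + (b,a*b) (with a=1, b=0) is a 2-cycle and is homologous to 2(f_1 + f_2), where f_1 = (a,b)+(a*b,b) and f_2 = (b,a)+(b*a,a), given that t_1 = (a,a*b) and t_2 = (b,b*a) are 2-torsion classes. -/

import Mathlib

/-- The dihedral quandle operation on `R_4 = ZMod 4`: `i * j = 2j - i`. -/
def dop (i j : ZMod 4) : ZMod 4 := 2 * j - i

/-- Quandle boundary of a basis triple: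
`∂(x,y,z) = (x,z) - (x*y,z) - (x,y) + (x*z,y*z)`. -/
noncomputable def d3single (x y z : ZMod 4) : (ZMod 4 × ZMod 4) →₀ ℤ :=
  Finsupp.single (x, z) 1 - Finsupp.single (dop x y, z) 1
    - Finsupp.single (x, y) 1 + Finsupp.single (dop x z, dop y z) 1

/-- Linear extension of the boundary to integral 3-chains. -/
noncomputable def d3 (w : (ZMod 4 × ZMod 4 × ZMod 4) →₀ ℤ) :
    (ZMod 4 × ZMod 4) →₀ ℤ :=
  w.sum fun p n => n • d3single p.1 p.2.1 p.2.2

/-- The degenerate 2-chains. -/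
noncomputable def deg2 : Submodule ℤ ((ZMod 4 × ZMod 4) →₀ ℤ) :=
  Submodule.span ℤ {f | ∃ x : ZMod 4, f = Finsupp.single (x, x) 1}

/-- The 8-term coloring cycle
`(a,b)+(a*b,b*a)+(b,a)+(b*a,a*b)+(a,b*a)+(a*b,b)+(b*a,a)+(b,a*b)`
with `a = 1`, `b = 0`, `a*b = 3`, `b*a = 2`. -/
noncomputable def z : (ZMod 4 × ZMod 4) →₀ ℤ :=
  Finsupp.single (1, 0) 1 + Finsupp.single (3, 2) 1 + Finsupp.single (0, 1) 1
    + Finsupp.single (2, 3) 1 + Finsupp.single (1, 2) 1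
    + Finsupp.single (3, 0) 1 + Finsupp.single (2, 1) 1
    + Finsupp.single (0, 3) 1

/-- `f_1 = (a,b) + (a*b,b)`. -/
noncomputable def f1 : (ZMod 4 × ZMod 4) →₀ ℤ :=
  Finsupp.single (1, 0) 1 + Finsupp.single (3, 0) 1

/-- `f_2 = (b,a) + (b*a,a)`. -/
noncomputable def f2 : (ZMod 4 × ZMod 4) →₀ ℤ :=
  Finsupp.single (0, 1) 1 + Finsupp.single (2, 1) 1

/-- `t_1 = (a, a*b)`. -/
noncomputable def t1 : (ZMod 4 × ZMod 4) →₀ ℤ := Finsupp.single (1, 3) 1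

/-- `t_2 = (b, b*a)`. -/
noncomputable def t2 : (ZMod 4 × ZMod 4) →₀ ℤ := Finsupp.single (0, 2) 1

/-!
Modulo degenerate chains, `z - 2(f₁ + f₂) - 2t₁ - 2t₂` is the boundary of an explicit
eight-term 3-chain, so once `2t₁` and `2t₂` are boundaries, so is `z - 2(f₁ + f₂)`.
That `z` is a cycle is a direct computation.
-/

open Finsupp

noncomputable def d2Linear : ((ZMod 4 × ZMod 4) →₀ ℤ) →ₗ[ℤ] ZMod 4 →₀ ℤ :=
  linearCombination ℤ fun p => single p.1 1 - single (dop p.1 p.2) 1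

theorem d2Linear_apply (c : (ZMod 4 × ZMod 4) →₀ ℤ) :
    d2Linear c = c.sum fun p n => n • (single p.1 (1 : ℤ) - single (dop p.1 p.2) 1) :=
  linearCombination_apply ℤ c

noncomputable def d3Linear :
    ((ZMod 4 × ZMod 4 × ZMod 4) →₀ ℤ) →ₗ[ℤ] (ZMod 4 × ZMod 4) →₀ ℤ :=
  linearCombination ℤ fun p => d3single p.1 p.2.1 p.2.2

theorem d3Linear_apply (w : (ZMod 4 × ZMod 4 × ZMod 4) →₀ ℤ) : d3Linear w = d3 w :=
  linearCombination_apply ℤ w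

theorem exists_sub_d3_mem_deg2_iff (c : (ZMod 4 × ZMod 4) →₀ ℤ) :
    (∃ w, c - d3 w ∈ deg2) ↔ c ∈ LinearMap.range d3Linear ⊔ deg2 := by
  simp only [Submodule.mem_sup, LinearMap.mem_range]
  constructor
  · rintro ⟨w, hw⟩
    exact ⟨d3 w, ⟨w, d3Linear_apply w⟩, c - d3 w, hw, add_sub_cancel _ _⟩
  · rintro ⟨_, ⟨w, rfl⟩, e, he, rfl⟩
    exact ⟨w, by rwa [d3Linear_apply, add_sub_cancel_left]⟩

theorem d2Linear_z : d2Linear z = 0 := by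
  ext i
  simp only [z, d2Linear, map_add, linearCombination_single, dop, one_smul, Finsupp.add_apply,
    Finsupp.sub_apply, Finsupp.coe_zero, Pi.zero_apply, single_apply]
  revert i
  decide

noncomputable def zHomologyWitness : (ZMod 4 × ZMod 4 × ZMod 4) →₀ ℤ :=
  single (0, 1, 0) 2 + single (0, 1, 3) (-1) + single (0, 2, 1) 2 + single (1, 0, 1) 2
    + single (1, 0, 2) (-1) + single (1, 0, 3) (-2) + single (1, 1, 0) (-2)
    + single (1, 2, 1) (-2)

theorem z_sub_two_smul_f1_add_f2 :
    z - (2 : ℤ) • (f1 + f2) = d3 zHomologyWitness + (2 : ℤ) • t1 + (2 : ℤ) • t2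
      - (2 : ℤ) • (single (0, 0) 1 + single (1, 1) 1) := by
  rw [← d3Linear_apply]
  ext ⟨i, j⟩
  simp only [zHomologyWitness, d3Linear, map_add, linearCombination_single, d3single, dop, z,
    f1, f2, t1, t2, Finsupp.add_apply, Finsupp.sub_apply, Finsupp.smul_apply, single_apply,
    smul_eq_mul]
  revert i j
  decide

/-- Given that `2t_1` and `2t_2` are boundaries (modulo degenerate chains), the
8-term chain `z` is a 2-cycle and is homologous to `2(f_1 + f_2)` in the quandle
chain complex of `R_4`. -/
theorem eight_term_cycle_homologous (ht1 : ∃ w : (ZMod 4 × ZMod 4 × ZMod 4) →₀ ℤ,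
      (2 : ℤ) • t1 - d3 w ∈ deg2)
    (ht2 : ∃ w : (ZMod 4 × ZMod 4 × ZMod 4) →₀ ℤ,
      (2 : ℤ) • t2 - d3 w ∈ deg2) :
    (z.sum (fun p n => n • (Finsupp.single p.1 (1 : ℤ)
        - Finsupp.single (dop p.1 p.2) 1)) = 0) ∧
    (∃ w : (ZMod 4 × ZMod 4 × ZMod 4) →₀ ℤ,
      z - (2 : ℤ) • (f1 + f2) - d3 w ∈ deg2) := by
  refine ⟨(d2Linear_apply z).symm.trans d2Linear_z, ?_⟩
  rw [exists_sub_d3_mem_deg2_iff] at ht1 ht2 ⊢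
  have hdeg : (2 : ℤ) • (single (0, 0) 1 + single (1, 1) 1) ∈ deg2 :=
    deg2.smul_mem 2 <|
      add_mem (Submodule.subset_span ⟨0, rfl⟩) (Submodule.subset_span ⟨1, rfl⟩)
  rw [z_sub_two_smul_f1_add_f2]
  refine sub_mem (add_mem (add_mem ?_ ht1) ht2) (Submodule.mem_sup_right hdeg)
  exact Submodule.mem_sup_left ⟨zHomologyWitness, d3Linear_apply _⟩
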